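/- arXiv:1601.08141 — 5 statements merged into one kernel-verified Lean document; each statement's English description precedes it below -/
import Mathlib

section
/- For any compact set M of d×d real matrices and any positive integer t, the pointwise stabilization radius satisfies ρ̃(M^t) = ρ̃(M)^t, where M^t denotes the set of all products of exactly t matrices from M. -/
/-!
Cutting a switching sequence of `M` into consecutive blocks of `t` steps turns its trajectory,
sampled every `t` steps, into a trajectory of `Mᵗ`; conversely every switching sequence of `Mᵗ`
unfolds into one of `M`. Hence a rate `λ` for `M` gives the rate `λᵗ` for `Mᵗ`, and a rate
`μ ≤ λᵗ` for `Mᵗ` gives the rate `λ` for `M`, since by compactness the growth inside one block is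
at most `Kᵗ` for a bound `K` on the operator norms of `M`. Both the infimum over rates and the
supremum over initial states commute with `λ ↦ λᵗ` on `[0, ∞)`.
-/

open Matrix Filter

noncomputable section

/-- Discrete-time switched trajectory: x(t) = A_{σ(t)} ⋯ A_{σ(1)} x. -/
def traj {d : ℕ} (σ : ℕ → Matrix (Fin d) (Fin d) ℝ) (x : EuclideanSpace ℝ (Fin d)) :
    ℕ → EuclideanSpace ℝ (Fin d)
  | 0 => x
  | t + 1 => (WithLp.toLp 2 ((σ (t + 1)).mulVec (traj σ x t)) : EuclideanSpace ℝ (Fin d))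

/-- Pointwise stabilization radius at x. -/
def stabRadAt {d : ℕ} (M : Set (Matrix (Fin d) (Fin d) ℝ)) (x : EuclideanSpace ℝ (Fin d)) : ℝ :=
  sInf {lam : ℝ | 0 ≤ lam ∧ ∃ σ : ℕ → Matrix (Fin d) (Fin d) ℝ, (∀ t, σ t ∈ M) ∧
    ∃ C > 0, ∀ t : ℕ, ‖traj σ x t‖ ≤ C * lam ^ t * ‖x‖}

/-- Pointwise stabilization radius. -/
def stabRad {d : ℕ} (M : Set (Matrix (Fin d) (Fin d) ℝ)) : ℝ :=
  ⨆ x : EuclideanSpace ℝ (Fin d), stabRadAt M x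

/-- The set of products of exactly t matrices from M. -/
def prodSet {d : ℕ} (M : Set (Matrix (Fin d) (Fin d) ℝ)) (t : ℕ) :
    Set (Matrix (Fin d) (Fin d) ℝ) :=
  {P | ∃ A : Fin t → Matrix (Fin d) (Fin d) ℝ, (∀ i, A i ∈ M) ∧ P = (List.ofFn A).prod}

theorem continuous_toEuclideanCLM {𝕜 n : Type*} [RCLike 𝕜] [Fintype n] [DecidableEq n] :
    Continuous (toEuclideanCLM (n := n) (𝕜 := 𝕜)) :=
  LinearMap.continuous_of_finiteDimensional
    (toEuclideanCLM (n := n) (𝕜 := 𝕜)).toAlgEquiv.toLinearMap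

theorem sInf_eq_sInf_pow {S T : Set ℝ} {t : ℕ} (ht : t ≠ 0) (hS : ∀ lam ∈ S, 0 ≤ lam)
    (hT : ∀ mu ∈ T, 0 ≤ mu) (hpow : ∀ lam ∈ S, lam ^ t ∈ T)
    (hroot : ∀ mu ∈ T, ∀ lam, 0 < lam → mu ≤ lam ^ t → lam ∈ S) :
    sInf T = sInf S ^ t := by
  rcases S.eq_empty_or_nonempty with rfl | hSne
  · have hTempty : T = ∅ := Set.eq_empty_of_forall_notMem fun mu hmu =>
      hroot mu hmu (mu + 1) (by linarith [hT mu hmu])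
        ((le_add_of_nonneg_right zero_le_one).trans
          (le_self_pow₀ (le_add_of_nonneg_left (hT mu hmu)) ht))
    rw [hTempty, Real.sInf_empty, zero_pow ht]
  have hSbdd : BddBelow S := ⟨0, fun _ h => hS _ h⟩
  apply le_antisymm
  · obtain ⟨u, -, hu, huS⟩ := exists_seq_tendsto_sInf hSne hSbdd
    exact ge_of_tendsto' (hu.pow t) fun n => csInf_le ⟨0, fun _ h => hT _ h⟩ (hpow _ (huS n))
  · refine le_csInf ⟨_, hpow _ hSne.some_mem⟩ fun mu hmu => ?_
    have hroot_pow : (mu ^ (t⁻¹ : ℝ)) ^ t = mu := Real.rpow_inv_natCast_pow (hT mu hmu) ht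
    have hroot_nonneg : 0 ≤ mu ^ (t⁻¹ : ℝ) := Real.rpow_nonneg (hT mu hmu) _
    have hle_root : sInf S ≤ mu ^ (t⁻¹ : ℝ) :=
      le_of_forall_gt_imp_ge_of_dense fun lam hlam => csInf_le hSbdd <|
        hroot mu hmu lam (hroot_nonneg.trans_lt hlam)
          (hroot_pow ▸ pow_le_pow_left₀ hroot_nonneg hlam.le t)
    calc sInf S ^ t ≤ (mu ^ (t⁻¹ : ℝ)) ^ t := pow_le_pow_left₀ (Real.sInf_nonneg hS) hle_root t
      _ = mu := hroot_pow

theorem pow_mul_pow_le_max_div_pow_mul_pow {K lam : ℝ} (hK : 0 ≤ K) (hlam : 0 < lam) {q r t : ℕ}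
    (hr : r ≤ t) : K ^ r * lam ^ q ≤ max 1 (K / lam) ^ t * lam ^ (q + r) := by
  have hdiv : K ^ r * lam ^ q = (K / lam) ^ r * lam ^ (q + r) := by
    rw [div_pow, pow_add]
    field_simp
  rw [hdiv]
  gcongr
  calc (K / lam) ^ r ≤ max 1 (K / lam) ^ r := by gcongr; exact le_max_right _ _
    _ ≤ max 1 (K / lam) ^ t := pow_le_pow_right₀ (le_max_left _ _) hr

section

variable {d : ℕ}

def stabRates (M : Set (Matrix (Fin d) (Fin d) ℝ)) (x : EuclideanSpace ℝ (Fin d)) : Set ℝ :=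
  {lam : ℝ | 0 ≤ lam ∧ ∃ σ : ℕ → Matrix (Fin d) (Fin d) ℝ, (∀ t, σ t ∈ M) ∧
    ∃ C > 0, ∀ t : ℕ, ‖traj σ x t‖ ≤ C * lam ^ t * ‖x‖}

theorem stabRadAt_eq_sInf_stabRates (M : Set (Matrix (Fin d) (Fin d) ℝ))
    (x : EuclideanSpace ℝ (Fin d)) : stabRadAt M x = sInf (stabRates M x) :=
  rfl

theorem traj_succ (σ : ℕ → Matrix (Fin d) (Fin d) ℝ) (x : EuclideanSpace ℝ (Fin d)) (n : ℕ) :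
    traj σ x (n + 1) = toEuclideanCLM (𝕜 := ℝ) (σ (n + 1)) (traj σ x n) :=
  rfl

/-- `σ (m + k) * ⋯ * σ (m + 1)`: steps `m + 1, …, m + k`, the latest on the left. -/
def stepProd (σ : ℕ → Matrix (Fin d) (Fin d) ℝ) (m k : ℕ) : Matrix (Fin d) (Fin d) ℝ :=
  (List.ofFn fun i : Fin k => σ (m + k - i)).prod

theorem traj_add (σ : ℕ → Matrix (Fin d) (Fin d) ℝ) (x : EuclideanSpace ℝ (Fin d)) (m k : ℕ) :
    traj σ x (m + k) = toEuclideanCLM (𝕜 := ℝ) (stepProd σ m k) (traj σ x m) := by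
  induction k with
  | zero => simp [stepProd]
  | succ k ih =>
    have hprod : stepProd σ m (k + 1) = σ (m + k + 1) * stepProd σ m k := by
      have hsub (i : ℕ) : m + (k + 1) - (i + 1) = m + k - i := by omega
      simp only [stepProd, List.ofFn_succ, List.prod_cons, Fin.val_zero, Fin.val_succ, hsub]
      rfl
    rw [← add_assoc, traj_succ, ih, hprod, map_mul]
    rfl

theorem stepProd_mem_prodSet {M : Set (Matrix (Fin d) (Fin d) ℝ)}
    {σ : ℕ → Matrix (Fin d) (Fin d) ℝ} (hσ : ∀ n, σ n ∈ M) (m k : ℕ) :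
    stepProd σ m k ∈ prodSet M k :=
  ⟨_, fun _ => hσ _, rfl⟩

theorem traj_mul_eq_of_blocks {σ τ : ℕ → Matrix (Fin d) (Fin d) ℝ} {t : ℕ}
    (hblock : ∀ s, τ (s + 1) = stepProd σ (t * s) t) (x : EuclideanSpace ℝ (Fin d)) (s : ℕ) :
    traj σ x (t * s) = traj τ x s := by
  induction s with
  | zero => rfl
  | succ s ih => rw [mul_add_one, traj_add, ih, traj_succ, hblock]

theorem exists_blocks_eq {M : Set (Matrix (Fin d) (Fin d) ℝ)} {t : ℕ} (ht : 0 < t)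
    {τ : ℕ → Matrix (Fin d) (Fin d) ℝ} (hτ : ∀ n, τ n ∈ prodSet M t) :
    ∃ σ : ℕ → Matrix (Fin d) (Fin d) ℝ, (∀ n, σ n ∈ M) ∧
      ∀ s, τ (s + 1) = stepProd σ (t * s) t := by
  choose F hFM hτF using hτ
  -- the factors of `τ (s + 1)`, applied right to left, become the steps `t * s + 1, …, t * s + t`
  refine ⟨fun n => F ((n - 1) / t + 1) ⟨t - 1 - (n - 1) % t, by omega⟩, fun n => hFM _ _,
    fun s => ?_⟩
  rw [hτF, stepProd]
  congr 2 with i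
  have hi : t * s + t - i - 1 = (t - 1 - i) + t * s := by omega
  have hlt : t - 1 - i < t := by omega
  simp only [hi, Nat.add_mul_div_left _ _ ht, Nat.add_mul_mod_self_left, Nat.div_eq_of_lt hlt,
    Nat.mod_eq_of_lt hlt, zero_add]
  congr
  exact Fin.ext (by simp only; omega)

theorem norm_traj_add_le {M : Set (Matrix (Fin d) (Fin d) ℝ)} {K : ℝ}
    (hK : ∀ A ∈ M, ‖toEuclideanCLM (𝕜 := ℝ) A‖ ≤ K) {σ : ℕ → Matrix (Fin d) (Fin d) ℝ}
    (hσ : ∀ n, σ n ∈ M) (x : EuclideanSpace ℝ (Fin d)) (m k : ℕ) :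
    ‖traj σ x (m + k)‖ ≤ K ^ k * ‖traj σ x m‖ := by
  have hK0 : 0 ≤ K := (norm_nonneg _).trans (hK _ (hσ 0))
  induction k with
  | zero => simp
  | succ k ih =>
    calc ‖traj σ x (m + k + 1)‖ ≤ K * ‖traj σ x (m + k)‖ :=
          (ContinuousLinearMap.le_opNorm _ _).trans
            (mul_le_mul_of_nonneg_right (hK _ (hσ _)) (norm_nonneg _))
      _ ≤ K * (K ^ k * ‖traj σ x m‖) := mul_le_mul_of_nonneg_left ih hK0
      _ = K ^ (k + 1) * ‖traj σ x m‖ := by ring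

theorem pow_mem_stabRates_prodSet {M : Set (Matrix (Fin d) (Fin d) ℝ)}
    {x : EuclideanSpace ℝ (Fin d)} {lam : ℝ} (hlam : lam ∈ stabRates M x) (t : ℕ) :
    lam ^ t ∈ stabRates (prodSet M t) x := by
  obtain ⟨hlam0, σ, hσ, C, hC, hbound⟩ := hlam
  refine ⟨pow_nonneg hlam0 t, fun n => stepProd σ (t * (n - 1)) t,
    fun n => stepProd_mem_prodSet hσ _ t, C, hC, fun s => ?_⟩
  rw [← traj_mul_eq_of_blocks (fun s => rfl), ← pow_mul]
  exact hbound (t * s)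

theorem mem_stabRates_of_mem_stabRates_prodSet {M : Set (Matrix (Fin d) (Fin d) ℝ)} {K : ℝ}
    (hK : ∀ A ∈ M, ‖toEuclideanCLM (𝕜 := ℝ) A‖ ≤ K) {t : ℕ} (ht : 0 < t)
    {x : EuclideanSpace ℝ (Fin d)} {mu lam : ℝ} (hmu : mu ∈ stabRates (prodSet M t) x)
    (hlam : 0 < lam) (hle : mu ≤ lam ^ t) : lam ∈ stabRates M x := by
  obtain ⟨hmu0, τ, hτ, C, hC, hbound⟩ := hmu
  obtain ⟨σ, hσ, hblock⟩ := exists_blocks_eq ht hτ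
  have hK0 : 0 ≤ K := (norm_nonneg _).trans (hK _ (hσ 0))
  refine ⟨hlam.le, σ, hσ, C * max 1 (K / lam) ^ t, by positivity, fun n => ?_⟩
  obtain ⟨q, r, hr, rfl⟩ : ∃ q r, r < t ∧ n = t * q + r :=
    ⟨n / t, n % t, Nat.mod_lt n ht, (Nat.div_add_mod n t).symm⟩
  calc ‖traj σ x (t * q + r)‖ ≤ K ^ r * ‖traj τ x q‖ := by
        rw [← traj_mul_eq_of_blocks hblock]
        exact norm_traj_add_le hK hσ x _ r
    _ ≤ K ^ r * (C * (lam ^ t) ^ q * ‖x‖) := by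
        gcongr
        exact (hbound q).trans (by gcongr)
    _ = C * (K ^ r * lam ^ (t * q)) * ‖x‖ := by ring
    _ ≤ C * (max 1 (K / lam) ^ t * lam ^ (t * q + r)) * ‖x‖ := by
        gcongr C * ?_ * _
        exact pow_mul_pow_le_max_div_pow_mul_pow hK0 hlam hr.le
    _ = C * max 1 (K / lam) ^ t * lam ^ (t * q + r) * ‖x‖ := by ring

theorem stabRadAt_prodSet {M : Set (Matrix (Fin d) (Fin d) ℝ)} {K : ℝ}
    (hK : ∀ A ∈ M, ‖toEuclideanCLM (𝕜 := ℝ) A‖ ≤ K) {t : ℕ} (ht : 0 < t)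
    (x : EuclideanSpace ℝ (Fin d)) : stabRadAt (prodSet M t) x = stabRadAt M x ^ t := by
  rw [stabRadAt_eq_sInf_stabRates, stabRadAt_eq_sInf_stabRates]
  exact sInf_eq_sInf_pow ht.ne' (fun _ h => h.1) (fun _ h => h.1)
    (fun _ h => pow_mem_stabRates_prodSet h t)
    (fun _ hmu _ hlam hle => mem_stabRates_of_mem_stabRates_prodSet hK ht hmu hlam hle)

end

/-- for compact M and t ≥ 1, ρ̃(Mᵗ) = ρ̃(M)ᵗ. -/
theorem stmt1 {d : ℕ} (M : Set (Matrix (Fin d) (Fin d) ℝ)) (hM : IsCompact M)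
    (t : ℕ) (ht : 0 < t) :
    stabRad (prodSet M t) = stabRad M ^ t := by
  obtain ⟨K, hK⟩ := hM.exists_bound_of_continuousOn continuous_toEuclideanCLM.continuousOn
  simp only [stabRad, stabRadAt_prodSet hK ht]
  exact (Real.iSup_pow (fun x => Real.sInf_nonneg fun _ h => h.1) t).symm
end
end

section
/- For the set M = {A₁, A₂} with A₁ the rotation by π/4 and A₂ = diag(1/2, 2), the joint spectral subradius ρ̌(M) equals 1, while the pointwise stabilization radius satisfies ρ̃(M) ≤ 0.9^{1/4} < 1; in particular ρ̌(M) ≠ ρ̃(M). -/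
open Matrix Filter

noncomputable section

/-- Rotation by π/4. -/
def A1 : Matrix (Fin 2) (Fin 2) ℝ := (Real.sqrt 2 / 2) • !![1, 1; -1, 1]

/-- diag(1/2, 2). -/
def A2 : Matrix (Fin 2) (Fin 2) ℝ := !![1/2, 0; 0, 2]

/-! Every product of `A1` and `A2` has determinant `1`, hence operator norm at least `1`: a
linear map multiplies volumes by `|det|` and sends the unit ball into the ball of radius `‖f‖`.
The powers of the rotation `A1` have norm exactly `1`, so the infimum defining the subradius is
`1` for every `t`.

For the stabilization radius, apply `A2` on the cone `x₂² ≤ 0.149 ‖x‖²` and `A1` elsewhere. The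
rotation `A1` is an isometry, `A2` shrinks vectors of the cone by `0.9`, and among four successive
rotations by `π / 4` one lands in the cone, so every closed-loop trajectory shrinks by `0.9` every
four steps. -/

open MeasureTheory Metric Module

theorem ContinuousLinearMap.abs_det_le_opNorm_pow {E : Type*} [NormedAddCommGroup E]
    [NormedSpace ℝ E] [FiniteDimensional ℝ E] (f : E →L[ℝ] E) :
    |LinearMap.det (f : E →ₗ[ℝ] E)| ≤ ‖f‖ ^ finrank ℝ E := by
  borelize E
  let μ : Measure E := Measure.addHaar
  have hsub : f '' closedBall 0 1 ⊆ closedBall 0 ‖f‖ := by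
    rintro _ ⟨x, hx, rfl⟩
    simpa using f.le_opNorm_of_le (mem_closedBall_zero_iff.1 hx)
  have h := measure_mono (μ := μ) hsub
  rw [Measure.addHaar_image_continuousLinearMap,
    Measure.addHaar_closedBall' μ 0 (norm_nonneg f)] at h
  exact (ENNReal.ofReal_le_ofReal_iff (by positivity)).1 <|
    (ENNReal.mul_le_mul_iff_left (measure_closedBall_pos μ 0 one_pos).ne'
      measure_closedBall_lt_top.ne).1 h

theorem Matrix.one_le_norm_toEuclideanCLM_of_det_eq_one {n : Type*} [Fintype n] [DecidableEq n]
    [Nonempty n] {A : Matrix n n ℝ} (hA : A.det = 1) : 1 ≤ ‖toEuclideanCLM (𝕜 := ℝ) A‖ := by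
  have h := (toEuclideanCLM (𝕜 := ℝ) A).abs_det_le_opNorm_pow
  rw [coe_toEuclideanCLM_eq_toEuclideanLin, toEuclideanLin_eq_toLin_orthonormal,
    LinearMap.det_toLin, hA, abs_one, finrank_euclideanSpace] at h
  exact (one_le_pow_iff_of_nonneg (norm_nonneg _) Fintype.card_ne_zero).1 h

theorem det_eq_one_of_mem_prodSet {d : ℕ} {M : Set (Matrix (Fin d) (Fin d) ℝ)}
    (hM : ∀ A ∈ M, A.det = 1) {t : ℕ} {P : Matrix (Fin d) (Fin d) ℝ} (hP : P ∈ prodSet M t) :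
    P.det = 1 := by
  obtain ⟨A, hA, rfl⟩ := hP
  exact (MonoidHom.mker (detMonoidHom (n := Fin d) (R := ℝ))).list_prod_mem <|
    List.forall_mem_ofFn_iff.2 fun i => hM _ (hA i)

theorem pow_mem_prodSet {d : ℕ} {M : Set (Matrix (Fin d) (Fin d) ℝ)} {A : Matrix (Fin d) (Fin d) ℝ}
    (hA : A ∈ M) (t : ℕ) : A ^ t ∈ prodSet M t :=
  ⟨fun _ => A, fun _ => hA, by simp [List.ofFn_const]⟩

theorem sInf_norm_rpow_prodSet_eq_one {d : ℕ} [NeZero d] {M : Set (Matrix (Fin d) (Fin d) ℝ)}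
    (hM : ∀ A ∈ M, A.det = 1) {U : Matrix (Fin d) (Fin d) ℝ} (hUM : U ∈ M)
    (hU : U ∈ unitaryGroup (Fin d) ℝ) (t : ℕ) :
    sInf ((fun P : Matrix (Fin d) (Fin d) ℝ => ‖toEuclideanCLM (𝕜 := ℝ) P‖ ^ ((t : ℝ)⁻¹)) ''
      prodSet M t) = 1 := by
  have hnorm : ‖toEuclideanCLM (𝕜 := ℝ) (U ^ t)‖ = 1 :=
    CStarRing.norm_of_mem_unitary <| Unitary.map_mem toEuclideanCLM (pow_mem hU t)
  refine IsLeast.csInf_eq ⟨⟨U ^ t, pow_mem_prodSet hUM t, by simp only [hnorm, Real.one_rpow]⟩, ?_⟩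
  rintro _ ⟨P, hP, rfl⟩
  exact Real.one_le_rpow
    (one_le_norm_toEuclideanCLM_of_det_eq_one (det_eq_one_of_mem_prodSet hM hP)) (by positivity)

theorem stabRadAt_le_of_forall_norm_traj_le {d : ℕ} {M : Set (Matrix (Fin d) (Fin d) ℝ)}
    {x : EuclideanSpace ℝ (Fin d)} {σ : ℕ → Matrix (Fin d) (Fin d) ℝ} (hσ : ∀ t, σ t ∈ M)
    {C lam : ℝ} (hC : 0 < C) (hlam : 0 ≤ lam) (h : ∀ t, ‖traj σ x t‖ ≤ C * lam ^ t * ‖x‖) :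
    stabRadAt M x ≤ lam :=
  csInf_le ⟨0, fun _ hμ => hμ.1⟩ ⟨hlam, σ, hσ, C, hC, h⟩

def feedbackTraj {d : ℕ} (f : EuclideanSpace ℝ (Fin d) → Matrix (Fin d) (Fin d) ℝ)
    (x : EuclideanSpace ℝ (Fin d)) : ℕ → EuclideanSpace ℝ (Fin d)
  | 0 => x
  | t + 1 => toEuclideanCLM (𝕜 := ℝ) (f (feedbackTraj f x t)) (feedbackTraj f x t)

/-- `traj` reads a signal from time `1` on, so the truncated `t - 1` only matters at time `0`. -/
def feedbackSignal {d : ℕ} (f : EuclideanSpace ℝ (Fin d) → Matrix (Fin d) (Fin d) ℝ)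
    (x : EuclideanSpace ℝ (Fin d)) (t : ℕ) : Matrix (Fin d) (Fin d) ℝ :=
  f (feedbackTraj f x (t - 1))

theorem traj_feedbackSignal {d : ℕ} (f : EuclideanSpace ℝ (Fin d) → Matrix (Fin d) (Fin d) ℝ)
    (x : EuclideanSpace ℝ (Fin d)) (t : ℕ) :
    traj (feedbackSignal f x) x t = feedbackTraj f x t := by
  induction t with
  | zero => rfl
  | succ t ih => simp only [traj, feedbackTraj, feedbackSignal, Nat.add_sub_cancel, ih]; rfl

theorem le_pow_div_mul_of_antitone {u : ℕ → ℝ} (hu : Antitone u) {q : ℝ} (hq : 0 ≤ q) {k : ℕ}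
    (hk : ∀ t, u (t + k) ≤ q * u t) (t : ℕ) : u t ≤ q ^ (t / k) * u 0 := by
  have hblock : ∀ n r, u (k * n + r) ≤ q ^ n * u r := by
    intro n r
    induction n with
    | zero => simp
    | succ n ih =>
      calc u (k * (n + 1) + r) = u (k * n + r + k) := by ring_nf
        _ ≤ q * u (k * n + r) := hk _
        _ ≤ q * (q ^ n * u r) := by gcongr
        _ = q ^ (n + 1) * u r := by ring
  calc u t = u (k * (t / k) + t % k) := by rw [Nat.div_add_mod]
    _ ≤ q ^ (t / k) * u (t % k) := hblock _ _
    _ ≤ q ^ (t / k) * u 0 := by gcongr; exact hu (Nat.zero_le _)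

theorem pow_div_le_inv_mul_rpow_pow {q : ℝ} (hq0 : 0 < q) (hq1 : q ≤ 1) (t k : ℕ) :
    q ^ (t / k) ≤ q⁻¹ * (q ^ (1 / k : ℝ)) ^ t := by
  have hfloor : (t : ℝ) / k - 1 ≤ (t / k : ℕ) := by
    rw [← Nat.floor_div_eq_div (K := ℝ)]
    exact (sub_lt_iff_lt_add.2 (Nat.lt_floor_add_one _)).le
  calc q ^ (t / k) = q ^ ((t / k : ℕ) : ℝ) := (Real.rpow_natCast q _).symm
    _ ≤ q ^ ((t : ℝ) / k - 1) := Real.rpow_le_rpow_of_exponent_ge hq0 hq1 hfloor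
    _ = q⁻¹ * (q ^ (1 / k : ℝ)) ^ t := by
      rw [← Real.rpow_natCast, ← Real.rpow_mul hq0.le, Real.rpow_sub hq0, Real.rpow_one]
      field_simp

theorem EuclideanSpace.norm_sq_fin_two (v : EuclideanSpace ℝ (Fin 2)) :
    ‖v‖ ^ 2 = v 0 ^ 2 + v 1 ^ 2 := by
  simp [EuclideanSpace.real_norm_sq_eq, Fin.sum_univ_two]

theorem A1_mem_unitaryGroup : A1 ∈ unitaryGroup (Fin 2) ℝ := by
  rw [mem_unitaryGroup_iff]
  ext i j
  fin_cases i <;> fin_cases j <;> norm_num [A1, Matrix.mul_apply, Fin.sum_univ_two, ← sq, div_pow]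

theorem A1_det : A1.det = 1 := by
  norm_num [A1, det_fin_two, ← sq, div_pow]

theorem A2_det : A2.det = 1 := by norm_num [A2, det_fin_two]

theorem toEuclideanCLM_A1_apply (v : EuclideanSpace ℝ (Fin 2)) :
    toEuclideanCLM (𝕜 := ℝ) A1 v =
      !₂[Real.sqrt 2 / 2 * (v 0 + v 1), Real.sqrt 2 / 2 * (v 1 - v 0)] := by
  ext i; fin_cases i <;> simp [A1, mulVec, dotProduct, Fin.sum_univ_two] <;> ring

theorem toEuclideanCLM_A1_iterate_two (v : EuclideanSpace ℝ (Fin 2)) :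
    (toEuclideanCLM (𝕜 := ℝ) A1)^[2] v = !₂[v 1, -v 0] := by
  have h : Real.sqrt 2 * Real.sqrt 2 = 2 := Real.mul_self_sqrt zero_le_two
  rw [Function.iterate_succ_apply', Function.iterate_one, toEuclideanCLM_A1_apply,
    toEuclideanCLM_A1_apply]
  ext i; fin_cases i <;>
    simp only [Fin.isValue, Fin.zero_eta, Fin.mk_one, cons_val_zero, cons_val_one, cons_val_fin_one]
  · linear_combination (v 1 / 2) * h
  · linear_combination (-v 0 / 2) * h

theorem norm_toEuclideanCLM_A1_apply (v : EuclideanSpace ℝ (Fin 2)) :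
    ‖toEuclideanCLM (𝕜 := ℝ) A1 v‖ = ‖v‖ :=
  ContinuousLinearMap.norm_map_of_mem_unitary (Unitary.map_mem _ A1_mem_unitaryGroup) v

/-- The value `0.149` lies between `sin² (π / 8) ≈ 0.1464`, which makes four successive rotations
by `π / 4` meet the cone, and `0.1493`, below which `A2` contracts the cone by the factor `0.9`. -/
def InCone (v : EuclideanSpace ℝ (Fin 2)) : Prop := v 1 ^ 2 ≤ 0.149 * ‖v‖ ^ 2

theorem norm_toEuclideanCLM_A2_apply_le {v : EuclideanSpace ℝ (Fin 2)} (hv : InCone v) :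
    ‖toEuclideanCLM (𝕜 := ℝ) A2 v‖ ≤ 0.9 * ‖v‖ := by
  have hA2 : toEuclideanCLM (𝕜 := ℝ) A2 v = !₂[v 0 / 2, 2 * v 1] := by
    ext i; fin_cases i
    · simp [A2, mulVec, dotProduct, Fin.sum_univ_two]; ring
    · simp [A2, mulVec, dotProduct, Fin.sum_univ_two]
  refine (sq_le_sq₀ (norm_nonneg _) (by positivity)).1 ?_
  rw [InCone, EuclideanSpace.norm_sq_fin_two] at hv
  rw [hA2, mul_pow, EuclideanSpace.norm_sq_fin_two, EuclideanSpace.norm_sq_fin_two]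
  simp only [Matrix.cons_val_zero, Matrix.cons_val_one]
  nlinarith [sq_nonneg (v 0)]

theorem cone_cover (a b : ℝ) :
    b ^ 2 ≤ 0.149 * (a ^ 2 + b ^ 2) ∨ (b - a) ^ 2 / 2 ≤ 0.149 * (a ^ 2 + b ^ 2) ∨
      a ^ 2 ≤ 0.149 * (a ^ 2 + b ^ 2) ∨ (a + b) ^ 2 / 2 ≤ 0.149 * (a ^ 2 + b ^ 2) := by
  by_contra! h
  obtain ⟨hb, hba, ha, hab⟩ := h
  set N := a ^ 2 + b ^ 2
  have hlow : 0.149 * 0.851 * N ^ 2 < a ^ 2 * b ^ 2 := by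
    nlinarith [mul_pos (sub_pos.2 ha) (sub_pos.2 hb)]
  have hup : a ^ 2 * b ^ 2 < 0.351 ^ 2 * N ^ 2 := by
    nlinarith [mul_pos (sub_pos.2 hba) (sub_pos.2 hab)]
  nlinarith [sq_nonneg N]

theorem exists_lt_four_inCone_iterate (v : EuclideanSpace ℝ (Fin 2)) :
    ∃ j < 4, InCone ((toEuclideanCLM (𝕜 := ℝ) A1)^[j] v) := by
  have hs : (Real.sqrt 2 / 2) ^ 2 = 1 / 2 := by
    rw [div_pow, Real.sq_sqrt zero_le_two]; norm_num
  have hnorm : ∀ j, ‖(toEuclideanCLM (𝕜 := ℝ) A1)^[j] v‖ = ‖v‖ := by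
    intro j
    induction j with
    | zero => rfl
    | succ j ih => rw [Function.iterate_succ_apply', norm_toEuclideanCLM_A1_apply, ih]
  simp only [InCone, hnorm, EuclideanSpace.norm_sq_fin_two]
  rcases cone_cover (v 0) (v 1) with hc | hc | hc | hc
  · exact ⟨0, by norm_num, hc⟩
  · refine ⟨1, by norm_num, ?_⟩
    rw [Function.iterate_one, toEuclideanCLM_A1_apply]
    simp only [cons_val_one, cons_val_fin_one]
    rw [mul_pow, hs]; linarith
  · refine ⟨2, by norm_num, ?_⟩
    rw [toEuclideanCLM_A1_iterate_two]
    simp only [cons_val_one, cons_val_fin_one]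
    rwa [neg_sq]
  · refine ⟨3, by norm_num, ?_⟩
    rw [Function.iterate_succ_apply', toEuclideanCLM_A1_iterate_two, toEuclideanCLM_A1_apply]
    simp only [cons_val_zero, cons_val_one, cons_val_fin_one]
    rw [mul_pow, hs, show (-v 0 - v 1) ^ 2 = (v 0 + v 1) ^ 2 by ring]; linarith

open Classical in
def coneSwitch (v : EuclideanSpace ℝ (Fin 2)) : Matrix (Fin 2) (Fin 2) ℝ :=
  if InCone v then A2 else A1

theorem coneSwitch_mem (v : EuclideanSpace ℝ (Fin 2)) : coneSwitch v ∈ ({A1, A2} : Set _) := by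
  unfold coneSwitch; split_ifs <;> simp

theorem antitone_norm_feedbackTraj_coneSwitch (x : EuclideanSpace ℝ (Fin 2)) :
    Antitone fun t => ‖feedbackTraj coneSwitch x t‖ := by
  refine antitone_nat_of_succ_le fun t => ?_
  rw [feedbackTraj, coneSwitch]
  split_ifs with h
  · have := norm_nonneg (feedbackTraj coneSwitch x t)
    linarith [norm_toEuclideanCLM_A2_apply_le h]
  · exact (norm_toEuclideanCLM_A1_apply _).le

theorem feedbackTraj_coneSwitch_add_eq_iterate {x : EuclideanSpace ℝ (Fin 2)} {t j : ℕ}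
    (h : ∀ i < j, ¬ InCone (feedbackTraj coneSwitch x (t + i))) :
    feedbackTraj coneSwitch x (t + j) =
      (toEuclideanCLM (𝕜 := ℝ) A1)^[j] (feedbackTraj coneSwitch x t) := by
  induction j with
  | zero => rfl
  | succ j ih =>
    rw [← add_assoc, feedbackTraj, coneSwitch, if_neg (h j j.lt_succ_self),
      ih fun i hi => h i (hi.trans j.lt_succ_self), Function.iterate_succ_apply']

theorem exists_lt_four_inCone_feedbackTraj_coneSwitch (x : EuclideanSpace ℝ (Fin 2)) (t : ℕ) :
    ∃ j < 4, InCone (feedbackTraj coneSwitch x (t + j)) := by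
  by_contra! h
  obtain ⟨j, hj, hcone⟩ := exists_lt_four_inCone_iterate (feedbackTraj coneSwitch x t)
  rw [← feedbackTraj_coneSwitch_add_eq_iterate fun i hi => h i (hi.trans hj)] at hcone
  exact h j hj hcone

theorem norm_feedbackTraj_coneSwitch_add_four_le (x : EuclideanSpace ℝ (Fin 2)) (t : ℕ) :
    ‖feedbackTraj coneSwitch x (t + 4)‖ ≤ 0.9 * ‖feedbackTraj coneSwitch x t‖ := by
  have hanti := antitone_norm_feedbackTraj_coneSwitch x
  obtain ⟨j, hj, hcone⟩ := exists_lt_four_inCone_feedbackTraj_coneSwitch x t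
  calc ‖feedbackTraj coneSwitch x (t + 4)‖ ≤ ‖feedbackTraj coneSwitch x (t + j + 1)‖ :=
        hanti (by omega)
    _ ≤ 0.9 * ‖feedbackTraj coneSwitch x (t + j)‖ := by
        rw [feedbackTraj, coneSwitch, if_pos hcone]
        exact norm_toEuclideanCLM_A2_apply_le hcone
    _ ≤ 0.9 * ‖feedbackTraj coneSwitch x t‖ := by gcongr; exact hanti (by omega)

theorem stabRad_le : stabRad {A1, A2} ≤ (0.9 : ℝ) ^ ((1 : ℝ) / 4) := by
  refine ciSup_le fun x => stabRadAt_le_of_forall_norm_traj_le (σ := feedbackSignal coneSwitch x)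
    (fun _ => coneSwitch_mem _) (C := 0.9⁻¹) (by norm_num) (by positivity) fun t => ?_
  rw [traj_feedbackSignal]
  have hpow := pow_div_le_inv_mul_rpow_pow (q := 0.9) (by norm_num) (by norm_num) t 4
  rw [Nat.cast_ofNat] at hpow
  calc ‖feedbackTraj coneSwitch x t‖ ≤ 0.9 ^ (t / 4) * ‖x‖ :=
        le_pow_div_mul_of_antitone (antitone_norm_feedbackTraj_coneSwitch x) (by norm_num)
          (norm_feedbackTraj_coneSwitch_add_four_le x) t
    _ ≤ 0.9⁻¹ * (0.9 ^ ((1 : ℝ) / 4)) ^ t * ‖x‖ := by gcongr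

/-- for M = {A₁, A₂}, the joint spectral subradius
(the limit of inf over products of t matrices of ‖P‖^(1/t)) equals 1,
while the pointwise stabilization radius satisfies ρ̃(M) ≤ 0.9^(1/4) < 1;
in particular ρ̃(M) < 1 differs from the joint spectral subradius. -/
theorem stmt4 :
    Tendsto (fun t : ℕ =>
        sInf ((fun P : Matrix (Fin 2) (Fin 2) ℝ => ‖Matrix.toEuclideanCLM (𝕜 := ℝ) P‖ ^ ((t : ℝ)⁻¹)) ''
          prodSet {A1, A2} t)) atTop (nhds 1) ∧
    stabRad {A1, A2} ≤ (0.9 : ℝ) ^ ((1 : ℝ) / 4) ∧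
    (0.9 : ℝ) ^ ((1 : ℝ) / 4) < 1 ∧
    stabRad {A1, A2} < 1 := by
  have hdet : ∀ A ∈ ({A1, A2} : Set (Matrix (Fin 2) (Fin 2) ℝ)), A.det = 1 := by
    rintro A (rfl | rfl)
    exacts [A1_det, A2_det]
  have hlt : (0.9 : ℝ) ^ ((1 : ℝ) / 4) < 1 :=
    Real.rpow_lt_one (by norm_num) (by norm_num) (by norm_num)
  refine ⟨?_, stabRad_le, hlt, stabRad_le.trans_lt hlt⟩
  simp_rw [sInf_norm_rpow_prodSet_eq_one hdet (Set.mem_insert A1 _) A1_mem_unitaryGroup]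
  exact tendsto_const_nhds
end
end

section
/- Let K ⊂ ℝ^d be a closed convex cone contained in a half-space {x : vᵀx ≥ 0} for some nonzero v, and embedded in the half-space in the sense that K ∖ {0} is contained in its open interior {x : vᵀx > 0}. Then there exists C > 0 such that for all w₁, w₂ with w₁ − w₂ ∈ K and w₂ ∈ K, one has |w₁| ≥ C |w₂|. -/
open scoped RealInnerProductSpace

noncomputable section

/-! A linear functional that is positive on `K ∖ {0}` attains a positive minimum on the compact
set `K ∩ sphere 0 1`; by homogeneity it then dominates a multiple of the norm on all of `K`. Since
`w₁ = (w₁ - w₂) + w₂` with both summands in `K`, the functional `⟪v, ·⟫` gives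
`c ‖w₂‖ ≤ ⟪v, w₁⟫ ≤ ‖v‖ ‖w₁‖`. -/

section ConeFunctional

variable {E : Type*} [NormedAddCommGroup E] [NormedSpace ℝ E] [ProperSpace E]
  {K : Set E} (f : E →L[ℝ] ℝ)

theorem exists_pos_le_on_sphere_inter_of_pos_on_cone (hclosed : IsClosed K)
    (hpos : ∀ x ∈ K, x ≠ 0 → 0 < f x) :
    ∃ c > 0, ∀ x ∈ Metric.sphere 0 1 ∩ K, c ≤ f x :=
  ((isCompact_sphere 0 1).inter_right hclosed).exists_forall_le' f.continuous.continuousOn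
    fun x hx ↦ hpos x hx.2 (ne_zero_of_mem_unit_sphere ⟨x, hx.1⟩)

theorem exists_pos_mul_norm_le_of_pos_on_cone (hclosed : IsClosed K)
    (hcone : ∀ c : ℝ, 0 ≤ c → ∀ x ∈ K, c • x ∈ K) (hpos : ∀ x ∈ K, x ≠ 0 → 0 < f x) :
    ∃ c > 0, ∀ x ∈ K, c * ‖x‖ ≤ f x := by
  obtain ⟨c, hc, hsphere⟩ := exists_pos_le_on_sphere_inter_of_pos_on_cone f hclosed hpos
  refine ⟨c, hc, fun x hx ↦ ?_⟩
  rcases eq_or_ne x 0 with rfl | hx0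
  · simp
  have hnorm : 0 < ‖x‖ := norm_pos_iff.mpr hx0
  have hunit : ‖x‖⁻¹ • x ∈ Metric.sphere 0 1 ∩ K :=
    ⟨by simp [norm_smul, hnorm.ne'], hcone _ (inv_nonneg.mpr hnorm.le) x hx⟩
  have := hsphere _ hunit
  rw [map_smul, smul_eq_mul, le_inv_mul_iff₀ hnorm] at this
  linarith

end ConeFunctional

theorem stmt5_general {d : ℕ} (K : Set (EuclideanSpace ℝ (Fin d))) (v : EuclideanSpace ℝ (Fin d))
    (hv : v ≠ 0) (hclosed : IsClosed K)
    (hcone : ∀ (c : ℝ), 0 ≤ c → ∀ x ∈ K, c • x ∈ K)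
    (hemb : ∀ x ∈ K, x ≠ 0 → 0 < ⟪v, x⟫) :
    ∃ C > 0, ∀ w₁ w₂ : EuclideanSpace ℝ (Fin d),
      w₁ - w₂ ∈ K → w₂ ∈ K → C * ‖w₂‖ ≤ ‖w₁‖ := by
  obtain ⟨c, hc, hbound⟩ :=
    exists_pos_mul_norm_le_of_pos_on_cone (innerSL ℝ v) hclosed hcone (by simpa using hemb)
  have hv_pos : 0 < ‖v‖ := norm_pos_iff.mpr hv
  refine ⟨c / ‖v‖, div_pos hc hv_pos, fun w₁ w₂ h12 h2 ↦ ?_⟩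
  have hdiff_bound := hbound _ h12
  have hw₂_bound := hbound _ h2
  simp only [innerSL_apply_apply] at hdiff_bound hw₂_bound
  rw [div_mul_eq_mul_div, div_le_iff₀ hv_pos]
  calc c * ‖w₂‖ ≤ ⟪v, w₁ - w₂⟫ + ⟪v, w₂⟫ := by
        linarith [mul_nonneg hc.le (norm_nonneg (w₁ - w₂))]
    _ = ⟪v, w₁⟫ := by rw [← inner_add_right, sub_add_cancel]
    _ ≤ ‖v‖ * ‖w₁‖ := real_inner_le_norm v w₁
    _ = ‖w₁‖ * ‖v‖ := mul_comm _ _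

/-- if K is a closed convex cone contained in the half-space
{x : ⟪v,x⟫ ≥ 0} and embedded in it (K ∖ {0} ⊆ {x : ⟪v,x⟫ > 0}), then there is
C > 0 with |w₁| ≥ C |w₂| whenever w₁ ≥_K w₂ ≥_K 0. -/
theorem stmt5 {d : ℕ} (K : Set (EuclideanSpace ℝ (Fin d))) (v : EuclideanSpace ℝ (Fin d))
    (hv : v ≠ 0) (hclosed : IsClosed K) (hconv : Convex ℝ K)
    (hcone : ∀ (c : ℝ), 0 ≤ c → ∀ x ∈ K, c • x ∈ K)
    (hhalf : ∀ x ∈ K, 0 ≤ ⟪v, x⟫)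
    (hemb : ∀ x ∈ K, x ≠ 0 → 0 < ⟪v, x⟫) :
    ∃ C > 0, ∀ w₁ w₂ : EuclideanSpace ℝ (Fin d),
      w₁ - w₂ ∈ K → w₂ ∈ K → C * ‖w₂‖ ≤ ‖w₁‖ :=
  stmt5_general K v hv hclosed hcone hemb
end
end

section
/- Let A = diag(2,1,1) and B be the 3×3 matrix with first column zero and all entries of the last two columns equal to 1 (i.e. B = [[0,1,1],[0,1,1],[0,1,1]]). Then B·e = 2e and B·Aᵀ'·e = 2e for all t (where e = (1,1,1)ᵀ and Aᵗ e has second and third coordinates equal to 1). Consequently, for every 0-homogeneous feedback σ : ℝ³ → {A,B}, the closed-loop trajectory from e satisfies limsup_{t→∞} |x(t)|^{1/t} > 1. -/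
/-!
Under `A` the orbit of `e` is `Aᵗ e = (2ᵗ, 1, 1)`, and `B` sends every such vector to `2 e`.
Since `σ` is constant on rays, the trajectory is decided by the first `m` with `σ (Aᵐ e) = B`:
if there is none, `x t = Aᵗ e`; otherwise `x (n (m + 1) + r) = 2ⁿ Aʳ e` for `r ≤ m`. In both cases
`2ᵏ ≤ ‖x t‖ ≤ √3 · 2ᵏ` with `t / p ≤ k ≤ t` for a fixed period `p`, so the `t`-th roots stay
between `2 ^ (1 / p)` and `2 √3`.
-/

open Matrix Filter

noncomputable section

/-- A = diag(2,1,1). -/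
def Amat : Matrix (Fin 3) (Fin 3) ℝ := !![2, 0, 0; 0, 1, 0; 0, 0, 1]

/-- B = [[0,1,1],[0,1,1],[0,1,1]]. -/
def Bmat : Matrix (Fin 3) (Fin 3) ℝ := !![0, 1, 1; 0, 1, 1; 0, 1, 1]

/-- The all-ones vector e = (1,1,1)ᵀ. -/
def eVec : EuclideanSpace ℝ (Fin 3) := WithLp.toLp 2 (fun _ => 1)

/-- Closed-loop trajectory under a feedback σ : x(0) = x₀, x(t+1) = σ(x(t))·x(t). -/
def clTraj (σ : EuclideanSpace ℝ (Fin 3) → Matrix (Fin 3) (Fin 3) ℝ)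
    (x0 : EuclideanSpace ℝ (Fin 3)) : ℕ → EuclideanSpace ℝ (Fin 3)
  | 0 => x0
  | t + 1 => (WithLp.toLp 2 ((σ (clTraj σ x0 t)).mulVec (clTraj σ x0 t)) : EuclideanSpace ℝ (Fin 3))

def orbitA (t : ℕ) : EuclideanSpace ℝ (Fin 3) := !₂[2 ^ t, 1, 1]

lemma orbitA_zero : orbitA 0 = eVec := by
  ext i; fin_cases i <;> simp [orbitA, eVec]

lemma Amat_mulVec_orbitA (t : ℕ) : Amat *ᵥ orbitA t = orbitA (t + 1) := by
  ext i; fin_cases i <;> simp [Amat, orbitA, mulVec, dotProduct, Fin.sum_univ_three, pow_succ']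

lemma Bmat_mulVec_orbitA (t : ℕ) : Bmat *ᵥ orbitA t = (2 : ℝ) • orbitA 0 := by
  ext i; fin_cases i <;> simp [Bmat, orbitA, mulVec, dotProduct, Fin.sum_univ_three] <;> norm_num

lemma Amat_pow_mulVec_eVec (t : ℕ) : (Amat ^ t) *ᵥ eVec = orbitA t := by
  induction t with
  | zero => simp [← orbitA_zero]
  | succ t ih => rw [pow_succ', ← mulVec_mulVec, ih, Amat_mulVec_orbitA]

lemma norm_orbitA (t : ℕ) : ‖orbitA t‖ = √((2 ^ t) ^ 2 + 2) := by
  simp only [orbitA, EuclideanSpace.norm_eq, Real.norm_eq_abs, sq_abs, Fin.sum_univ_three,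
    cons_val_zero, cons_val_one, one_pow, cons_val]
  ring_nf

lemma pow_le_norm_orbitA (t : ℕ) : 2 ^ t ≤ ‖orbitA t‖ := by
  rw [norm_orbitA]
  exact Real.le_sqrt_of_sq_le (by linarith)

lemma norm_orbitA_le (t : ℕ) : ‖orbitA t‖ ≤ √3 * 2 ^ t := by
  have h : (1 : ℝ) ≤ (2 ^ t) ^ 2 := one_le_pow₀ (one_le_pow₀ one_le_two)
  calc ‖orbitA t‖ ≤ √(3 * (2 ^ t) ^ 2) := by rw [norm_orbitA]; gcongr; linarith
    _ = √3 * 2 ^ t := by rw [Real.sqrt_mul (by norm_num), Real.sqrt_sq (by positivity)]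

-- The upper bound only serves to bound the sequence: in `ℝ` the `limsup` of a sequence that is
-- unbounded above is junk (`0`).
lemma one_lt_limsup_rpow_inv {u : ℕ → ℝ} {c C : ℝ} {p : ℕ} (hc : 1 < c) (hC : 1 ≤ C) (hp : 0 < p)
    (h : ∀ t, ∃ k, t ≤ p * k ∧ c ^ k ≤ u t ∧ u t ≤ C * c ^ t) :
    1 < limsup (fun t : ℕ => u t ^ (t : ℝ)⁻¹) atTop := by
  have hc0 : 0 < c := by linarith
  have lower : ∀ t, 0 < t → c ^ (p : ℝ)⁻¹ ≤ u t ^ (t : ℝ)⁻¹ := by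
    intro t ht
    obtain ⟨k, htk, hk, -⟩ := h t
    have hexp : (p : ℝ)⁻¹ ≤ k * (t : ℝ)⁻¹ := by
      rw [← div_eq_mul_inv, inv_eq_one_div, div_le_div_iff₀ (by positivity) (by positivity),
        one_mul, mul_comm]
      exact_mod_cast htk
    calc c ^ (p : ℝ)⁻¹ ≤ c ^ (k * (t : ℝ)⁻¹) := Real.rpow_le_rpow_of_exponent_le hc.le hexp
      _ = (c ^ k) ^ (t : ℝ)⁻¹ := by rw [Real.rpow_mul hc0.le, Real.rpow_natCast]
      _ ≤ u t ^ (t : ℝ)⁻¹ := by gcongr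
  have upper : ∀ t, 0 < t → u t ^ (t : ℝ)⁻¹ ≤ C * c := by
    intro t ht
    obtain ⟨k, -, hk, hu⟩ := h t
    have htinv : (t : ℝ)⁻¹ ≤ 1 := inv_le_one_of_one_le₀ (by exact_mod_cast ht)
    calc u t ^ (t : ℝ)⁻¹ ≤ (C * c ^ t) ^ (t : ℝ)⁻¹ := by gcongr; exact (pow_pos hc0 k).le.trans hk
      _ = C ^ (t : ℝ)⁻¹ * c := by
        rw [Real.mul_rpow (by linarith) (by positivity), ← Real.rpow_natCast,
          ← Real.rpow_mul hc0.le, mul_inv_cancel₀ (by positivity), Real.rpow_one]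
      _ ≤ C * c := by gcongr; exact Real.rpow_le_self_of_one_le hC htinv
  refine (Real.one_lt_rpow (z := (p : ℝ)⁻¹) hc (by positivity)).trans_le
    (le_limsup_of_frequently_le ?_ ?_)
  · exact (eventually_atTop.2 ⟨1, lower⟩).frequently
  · exact isBoundedUnder_of_eventually_le (eventually_atTop.2 ⟨1, upper⟩)

lemma norm_two_pow_smul_orbitA (n r : ℕ) :
    2 ^ (n + r) ≤ ‖(2 : ℝ) ^ n • orbitA r‖ ∧ ‖(2 : ℝ) ^ n • orbitA r‖ ≤ √3 * 2 ^ (n + r) := by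
  rw [norm_smul, Real.norm_of_nonneg (by positivity), pow_add]
  constructor
  · gcongr; exact pow_le_norm_orbitA r
  · calc (2 : ℝ) ^ n * ‖orbitA r‖ ≤ 2 ^ n * (√3 * 2 ^ r) := by gcongr; exact norm_orbitA_le r
      _ = √3 * (2 ^ n * 2 ^ r) := by ring

lemma one_lt_limsup_of_eq_two_pow_smul_orbitA {x : ℕ → EuclideanSpace ℝ (Fin 3)} {p : ℕ}
    (hp : 0 < p) (h : ∀ t, ∃ n r, n + r ≤ t ∧ t ≤ p * (n + r) ∧ x t = (2 : ℝ) ^ n • orbitA r) :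
    1 < limsup (fun t : ℕ => ‖x t‖ ^ (t : ℝ)⁻¹) atTop := by
  refine one_lt_limsup_rpow_inv (C := √3) one_lt_two (Real.one_le_sqrt.2 (by norm_num)) hp
    fun t => ?_
  obtain ⟨n, r, hle, hge, hx⟩ := h t
  obtain ⟨hlow, hup⟩ := norm_two_pow_smul_orbitA n r
  refine ⟨n + r, hge, hx ▸ hlow, hx ▸ hup.trans ?_⟩
  exact mul_le_mul_of_nonneg_left (pow_le_pow_right₀ one_le_two hle) (Real.sqrt_nonneg 3)

section ClosedLoop

variable {σ : EuclideanSpace ℝ (Fin 3) → Matrix (Fin 3) (Fin 3) ℝ}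

lemma clTraj_succ_of_eq_smul (hom : ∀ (c : ℝ) x, c ≠ 0 → σ (c • x) = σ x)
    {x0 v : EuclideanSpace ℝ (Fin 3)} {c : ℝ} {t : ℕ} (hc : c ≠ 0) (h : clTraj σ x0 t = c • v) :
    clTraj σ x0 (t + 1) = c • WithLp.toLp 2 (σ v *ᵥ v) := by
  rw [clTraj, h, hom c v hc, WithLp.ofLp_smul, mulVec_smul]
  rfl

lemma clTraj_eVec_of_forall_eq_Amat (hA : ∀ m, σ (orbitA m) = Amat) (t : ℕ) :
    clTraj σ eVec t = orbitA t := by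
  induction t with
  | zero => exact orbitA_zero.symm
  | succ t ih => rw [clTraj, ih, hA, Amat_mulVec_orbitA, WithLp.toLp_ofLp]

lemma clTraj_eVec_of_eq_Bmat (hom : ∀ (c : ℝ) x, c ≠ 0 → σ (c • x) = σ x) {m : ℕ}
    (hA : ∀ r < m, σ (orbitA r) = Amat) (hB : σ (orbitA m) = Bmat) (t : ℕ) :
    ∃ n r, r ≤ m ∧ t = n * (m + 1) + r ∧ clTraj σ eVec t = (2 : ℝ) ^ n • orbitA r := by
  induction t with
  | zero => exact ⟨0, 0, Nat.zero_le m, by ring, by rw [pow_zero, one_smul, orbitA_zero]; rfl⟩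
  | succ t ih =>
    obtain ⟨n, r, hrm, rfl, hx⟩ := ih
    have hstep := clTraj_succ_of_eq_smul hom (pow_ne_zero n two_ne_zero) hx
    rcases hrm.lt_or_eq with hrm | rfl
    · refine ⟨n, r + 1, hrm, by ring, ?_⟩
      rw [hstep, hA r hrm, Amat_mulVec_orbitA, WithLp.toLp_ofLp]
    · refine ⟨n + 1, 0, Nat.zero_le _, by ring, ?_⟩
      rw [hstep, hB, Bmat_mulVec_orbitA, WithLp.toLp_smul, WithLp.toLp_ofLp, smul_smul, pow_succ]

end ClosedLoop

/-- Be = 2e and BAᵗe = 2e for all t; consequently every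
0-homogeneous feedback σ with values in {A, B} yields a closed-loop trajectory
from e with limsup |x(t)|^(1/t) > 1. -/
theorem stmt8 :
    Bmat.mulVec eVec = ((2 : ℝ) • eVec : EuclideanSpace ℝ (Fin 3)) ∧
    (∀ t : ℕ, Bmat.mulVec ((Amat ^ t).mulVec eVec) =
      ((2 : ℝ) • eVec : EuclideanSpace ℝ (Fin 3))) ∧
    ∀ σ : EuclideanSpace ℝ (Fin 3) → Matrix (Fin 3) (Fin 3) ℝ,
      (∀ x, σ x = Amat ∨ σ x = Bmat) →
      (∀ (c : ℝ) (x : EuclideanSpace ℝ (Fin 3)), c ≠ 0 → σ (c • x) = σ x) →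
      1 < Filter.limsup (fun t : ℕ => ‖clTraj σ eVec t‖ ^ ((t : ℝ)⁻¹)) Filter.atTop := by
  refine ⟨by simpa [orbitA_zero] using Bmat_mulVec_orbitA 0,
    fun t => by simpa [Amat_pow_mulVec_eVec, orbitA_zero] using Bmat_mulVec_orbitA t, ?_⟩
  intro σ hσ hom
  by_cases hB : ∃ m, σ (orbitA m) = Bmat
  · classical
    have hA : ∀ r < Nat.find hB, σ (orbitA r) = Amat :=
      fun r hr => (hσ _).resolve_right (Nat.find_min hB hr)
    refine one_lt_limsup_of_eq_two_pow_smul_orbitA (Nat.succ_pos (Nat.find hB)) fun t => ?_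
    obtain ⟨n, r, -, ht, hx⟩ := clTraj_eVec_of_eq_Bmat hom hA (Nat.find_spec hB) t
    exact ⟨n, r, by nlinarith, by nlinarith, hx⟩
  · simp only [not_exists] at hB
    have hA : ∀ m, σ (orbitA m) = Amat := fun m => (hσ _).resolve_right (hB m)
    refine one_lt_limsup_of_eq_two_pow_smul_orbitA one_pos fun t => ?_
    exact ⟨0, t, by simp, by simp, by rw [pow_zero, one_smul, clTraj_eVec_of_forall_eq_Amat hA]⟩
end
end

section
/- Under the map (p,q) ↦ (4p, q) (action of A₂ on rational tangents p/q) and the map (p,q) ↦ (p−q, p+q) (action of A₁), starting from (p,q) = (0,1) and reducing by common factors at each step, all reachable coprime pairs (p,q) of positive integers satisfy: neither p nor q is congruent to 2 modulo 4. -/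
/-!
On absolute values, A₁ acts as `(m, n) ↦ (m + n, |m - n|)` up to order, A₂ multiplies one
entry by 4, and reduction divides both entries by a common factor. Call `(m, n)` balanced if
an entry vanishes, or `m = 2^i a`, `n = 2^j b` with `a, b` odd, `i + j` even and
`(a + b, |a - b|)` again balanced. This is preserved by all three operations: when `i = j`,
A₁ only pulls out the common factor `2^i`; when `j = i + 2t > i`, it produces `2^i` times the
odd pair `(a + 4^t b, |a - 4^t b|)`, whose sum and difference are `2a` and `2^(2t+1) b` in
some order.
In a coprime balanced pair one of `i, j` is `0`, so the other one is even, and no entry is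
`2` modulo `4`.
-/

/-- Reachable (integer) pairs representing tangents of lines in the orbit of the
x₁-axis: starting from (0,1), one may apply the action of A₂ on tangents
((p,q) ↦ (4p,q)) or of its inverse ((p,q) ↦ (p,4q)), the action of A₁
((p,q) ↦ (p−q, p+q)) or of its inverse ((p,q) ↦ (p+q, q−p)), reduce by a
common factor, or change sign (symmetry with respect to the x₁-axis). -/
inductive Reach : ℤ → ℤ → Prop
  | base : Reach 0 1
  | a2 (p q : ℤ) : Reach p q → Reach (4 * p) q
  | a2inv (p q : ℤ) : Reach p q → Reach p (4 * q)
  | a1 (p q : ℤ) : Reach p q → Reach (p - q) (p + q)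
  | a1inv (p q : ℤ) : Reach p q → Reach (p + q) (q - p)
  | reduce (d p q : ℤ) (hd : d ≠ 0) : Reach (d * p) (d * q) → Reach p q
  | sign (p q : ℤ) : Reach p q → Reach (-p) q

theorem two_pow_mul_odd_inj {i j a b : ℕ} (ha : Odd a) (hb : Odd b)
    (h : 2 ^ i * a = 2 ^ j * b) : i = j ∧ a = b := by
  have hval : ∀ {k c : ℕ}, Odd c → padicValNat 2 (2 ^ k * c) = k := fun {k c} hc => by
    rw [padicValNat.mul (by positivity) hc.pos.ne', padicValNat.prime_pow,
      padicValNat.eq_zero_of_not_dvd hc.not_two_dvd_nat, add_zero]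
  have hij : i = j := by rw [← hval (k := i) ha, h, hval hb]
  subst hij
  exact ⟨rfl, Nat.eq_of_mul_eq_mul_left (by positivity) h⟩

theorem eq_one_of_two_pow_mul_odd_mod_four {i a : ℕ} (ha : Odd a) (h : 2 ^ i * a % 4 = 2) :
    i = 1 := by
  rw [Nat.odd_iff] at ha
  rcases i with _ | _ | i
  · omega
  · rfl
  · rw [show 2 ^ (i + 2) * a = 4 * (2 ^ i * a) by ring] at h
    omega

inductive TwoAdicBalanced : ℕ → ℕ → Prop
  | zero_left (n : ℕ) : TwoAdicBalanced 0 n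
  | zero_right (m : ℕ) : TwoAdicBalanced m 0
  | two_pow_mul (i j a b : ℕ) : Odd a → Odd b → Even (i + j) →
      TwoAdicBalanced (a + b) (Nat.dist a b) → TwoAdicBalanced (2 ^ i * a) (2 ^ j * b)

namespace TwoAdicBalanced

theorem symm {m n : ℕ} (h : TwoAdicBalanced m n) : TwoAdicBalanced n m := by
  cases h with
  | zero_left n => exact zero_right n
  | zero_right m => exact zero_left m
  | two_pow_mul i j a b ha hb hij h =>
    exact two_pow_mul j i b a hb ha (by rwa [add_comm]) (by rwa [add_comm, Nat.dist_comm])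

theorem self (n : ℕ) : TwoAdicBalanced n n := by
  obtain rfl | hn := eq_or_ne n 0
  · exact zero_left 0
  obtain ⟨k, a, ha, rfl⟩ := Nat.exists_eq_two_pow_mul_odd hn
  exact two_pow_mul k k a a ha ha ⟨k, rfl⟩ (by rw [Nat.dist_self]; exact zero_right _)

theorem four_mul {m n : ℕ} (h : TwoAdicBalanced m n) : TwoAdicBalanced (4 * m) n := by
  cases h with
  | zero_left n => exact zero_left n
  | zero_right m => exact zero_right _
  | two_pow_mul i j a b ha hb hij h =>
    rw [show 4 * (2 ^ i * a) = 2 ^ (i + 2) * a by ring]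
    exact two_pow_mul _ _ a b ha hb (by rw [Nat.even_iff] at hij ⊢; omega) h

theorem mul {m n : ℕ} (h : TwoAdicBalanced m n) (c : ℕ) : TwoAdicBalanced (c * m) (c * n) := by
  induction h generalizing c with
  | zero_left n => simpa using zero_left (c * n)
  | zero_right m => simpa using zero_right (c * m)
  | two_pow_mul i j a b ha hb hij _ ih =>
    obtain rfl | hc := eq_or_ne c 0
    · simpa using zero_left 0
    obtain ⟨k, d, hd, rfl⟩ := Nat.exists_eq_two_pow_mul_odd hc
    have hsplit : ∀ l x : ℕ, 2 ^ k * d * (2 ^ l * x) = 2 ^ (k + l) * (d * x) := by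
      intros; ring
    rw [hsplit, hsplit]
    refine two_pow_mul _ _ _ _ (hd.mul ha) (hd.mul hb)
      (by rw [Nat.even_iff] at hij ⊢; omega) ?_
    rw [← mul_add, Nat.dist_mul_left]
    exact ih d

theorem of_mul {c m n : ℕ} (hc : c ≠ 0) (h : TwoAdicBalanced (c * m) (c * n)) :
    TwoAdicBalanced m n := by
  generalize hM : c * m = M, hN : c * n = N at h
  induction h generalizing c m n with
  | zero_left n' =>
    rw [(mul_eq_zero.mp hM).resolve_left hc]
    exact zero_left n
  | zero_right m' =>
    rw [(mul_eq_zero.mp hN).resolve_left hc]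
    exact zero_right m
  | two_pow_mul i j a b ha hb hij _ ih =>
    obtain rfl | hm := eq_or_ne m 0
    · exact zero_left n
    obtain rfl | hn := eq_or_ne n 0
    · exact zero_right m
    obtain ⟨k, d, hd, rfl⟩ := Nat.exists_eq_two_pow_mul_odd hc
    obtain ⟨i', a', ha', rfl⟩ := Nat.exists_eq_two_pow_mul_odd hm
    obtain ⟨j', b', hb', rfl⟩ := Nat.exists_eq_two_pow_mul_odd hn
    have hsplit : ∀ l x : ℕ, 2 ^ k * d * (2 ^ l * x) = 2 ^ (k + l) * (d * x) := by
      intros; ring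
    rw [hsplit] at hM hN
    obtain ⟨rfl, rfl⟩ := two_pow_mul_odd_inj (hd.mul ha') ha hM
    obtain ⟨rfl, rfl⟩ := two_pow_mul_odd_inj (hd.mul hb') hb hN
    refine two_pow_mul i' j' a' b' ha' hb' (by rw [Nat.even_iff] at hij ⊢; omega) ?_
    exact ih hd.pos.ne' (mul_add d a' b') (Nat.dist_mul_left d a' b').symm

theorem of_odd {a b : ℕ} (ha : Odd a) (hb : Odd b)
    (h : TwoAdicBalanced (a + b) (Nat.dist a b)) : TwoAdicBalanced a b := by
  simpa using two_pow_mul 0 0 a b ha hb ⟨0, rfl⟩ h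

theorem add_dist_two_pow_mul {t a b : ℕ} (ha : Odd a) (hb : Odd b)
    (h : TwoAdicBalanced (a + b) (Nat.dist a b)) :
    TwoAdicBalanced (a + 2 ^ (2 * t + 2) * b) (Nat.dist a (2 ^ (2 * t + 2) * b)) := by
  have key := two_pow_mul 1 (2 * t + 3) a b ha hb ⟨t + 2, by ring⟩ h
  rw [pow_one] at key
  have h2C : 2 * (2 ^ (2 * t + 2) * b) = 2 ^ (2 * t + 3) * b := by ring
  have hCeven : 2 ^ (2 * t + 2) * b = 2 * (2 ^ (2 * t + 1) * b) := by ring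
  generalize 2 ^ (2 * t + 2) * b = C at h2C hCeven ⊢
  rw [Nat.odd_iff] at ha
  refine of_odd (by rw [Nat.odd_iff]; omega) (by unfold Nat.dist; rw [Nat.odd_iff]; omega) ?_
  rcases lt_or_gt_of_ne (show a ≠ C by omega) with haC | hCa
  · convert key.symm using 1 <;> unfold Nat.dist <;> omega
  · convert key using 1 <;> unfold Nat.dist <;> omega

theorem add_dist_of_le {i j a b : ℕ} (ha : Odd a) (hb : Odd b) (hij : Even (i + j))
    (hle : i ≤ j) (h : TwoAdicBalanced (a + b) (Nat.dist a b)) :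
    TwoAdicBalanced (2 ^ i * a + 2 ^ j * b) (Nat.dist (2 ^ i * a) (2 ^ j * b)) := by
  obtain ⟨t, rfl⟩ : ∃ t, j = i + 2 * t :=
    ⟨(j - i) / 2, by rw [Nat.even_iff] at hij; omega⟩
  rw [pow_add, mul_assoc, ← mul_add, Nat.dist_mul_left]
  refine mul ?_ _
  rcases t with _ | t
  · simpa using h
  · exact add_dist_two_pow_mul ha hb h

theorem add_dist {m n : ℕ} (h : TwoAdicBalanced m n) :
    TwoAdicBalanced (m + n) (Nat.dist m n) := by
  cases h with
  | zero_left n => simpa [Nat.dist_zero_left] using self n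
  | zero_right m => simpa [Nat.dist_zero_right] using self m
  | two_pow_mul i j a b ha hb hij h =>
    rcases le_total i j with hle | hle
    · exact add_dist_of_le ha hb hij hle h
    · rw [add_comm, Nat.dist_comm]
      exact add_dist_of_le hb ha (by rwa [add_comm]) hle (by rwa [add_comm, Nat.dist_comm])

theorem natAbs_sub_add {p q : ℤ} (h : TwoAdicBalanced p.natAbs q.natAbs) :
    TwoAdicBalanced (p - q).natAbs (p + q).natAbs := by
  have h' := h.add_dist
  unfold Nat.dist at h'
  rcases (by omega : (p - q).natAbs = p.natAbs + q.natAbs ∧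
      (p + q).natAbs = p.natAbs - q.natAbs + (q.natAbs - p.natAbs) ∨
      (p + q).natAbs = p.natAbs + q.natAbs ∧
      (p - q).natAbs = p.natAbs - q.natAbs + (q.natAbs - p.natAbs))
    with ⟨e₁, e₂⟩ | ⟨e₁, e₂⟩
  · rw [e₁, e₂]
    exact h'
  · rw [e₁, e₂]
    exact h'.symm

theorem mod_four_ne_two {m n : ℕ} (h : TwoAdicBalanced m n) (hmn : Nat.Coprime m n) :
    m % 4 ≠ 2 := by
  intro hm
  cases h with
  | zero_left n => simp at hm
  | zero_right m => simp [(Nat.coprime_zero_right m).mp hmn] at hm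
  | two_pow_mul i j a b ha hb hij h =>
    obtain rfl := eq_one_of_two_pow_mul_odd_mod_four ha hm
    have hj : j ≠ 0 := by rintro rfl; simp at hij
    exact Nat.not_coprime_of_dvd_of_dvd one_lt_two (Dvd.intro _ rfl)
      (dvd_mul_of_dvd_left (dvd_pow_self 2 hj) b) hmn

end TwoAdicBalanced

theorem Reach.twoAdicBalanced_natAbs {p q : ℤ} (h : Reach p q) :
    TwoAdicBalanced p.natAbs q.natAbs := by
  induction h with
  | base => exact .zero_left 1
  | a2 p q _ ih =>
    rw [Int.natAbs_mul]
    exact ih.four_mul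
  | a2inv p q _ ih =>
    rw [Int.natAbs_mul]
    exact ih.symm.four_mul.symm
  | a1 p q _ ih => exact ih.natAbs_sub_add
  | a1inv p q _ ih =>
    rw [add_comm]
    exact ih.symm.natAbs_sub_add.symm
  | reduce d p q hd _ ih =>
    rw [Int.natAbs_mul, Int.natAbs_mul] at ih
    exact ih.of_mul (Int.natAbs_ne_zero.mpr hd)
  | sign p q _ ih => rwa [Int.natAbs_neg]

theorem stmt15_general (p q : ℤ) (h : Reach p q) (hcop : IsCoprime p q) :
    p % 4 ≠ 2 ∧ q % 4 ≠ 2 := by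
  have hpq : Nat.Coprime p.natAbs q.natAbs := Int.isCoprime_iff_gcd_eq_one.mp hcop
  have hp := h.twoAdicBalanced_natAbs.mod_four_ne_two hpq
  have hq := h.twoAdicBalanced_natAbs.symm.mod_four_ne_two hpq.symm
  omega

/-- every reachable coprime pair (p,q) of positive integers has
neither component congruent to 2 modulo 4. -/
theorem stmt15 (p q : ℤ) (h : Reach p q) (hcop : IsCoprime p q)
    (hp : 0 < p) (hq : 0 < q) :
    p % 4 ≠ 2 ∧ q % 4 ≠ 2 :=
  stmt15_general p q h hcop
end
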